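/- Fix α ∈ (0,1] and μ > 0. If for P-almost every d ∈ D the map θ ↦ ℓ(θ,d) is μ-strongly convex on ℝ^m, and ℓ(θ,·) is P-integrable for every θ, then the map θ ↦ CV@R^α(ℓ(θ,·)) := inf_{t ∈ ℝ} { t + (1/α)·E_P[(ℓ(θ,d) − t)_+] } is real-valued and μ-strongly convex on ℝ^m. -/

import Mathlib

/-!
CV@R is translation equivariant, `CV@R^α(Z - k) = CV@R^α(Z) - k`, so subtracting `μ/2 ‖θ‖²` from
`CV@R^α(ℓ(θ,·))` gives the CV@R of the a.e. convex loss `ℓ(θ,·) - μ/2 ‖θ‖²`. For a convex loss the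
Rockafellar–Uryasev objective `t + α⁻¹ E[(ℓ(θ,·) - t)₊]` is jointly convex in `(θ, t)`, and
minimising a jointly convex function over one variable leaves a convex function of the other.
-/

open MeasureTheory Set

noncomputable section

theorem convexOn_integral {D E : Type*} [MeasurableSpace D] [AddCommMonoid E] [Module ℝ E]
    {P : Measure D} {s : Set E} {f : E → D → ℝ} (hs : Convex ℝ s)
    (hf : ∀ᵐ d ∂P, ConvexOn ℝ s fun x => f x d) (hint : ∀ x ∈ s, Integrable (f x) P) :
    ConvexOn ℝ s fun x => ∫ d, f x d ∂P := by
  refine ⟨hs, fun x hx y hy a b ha hb hab => ?_⟩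
  have hx' := (hint x hx).const_mul a
  have hy' := (hint y hy).const_mul b
  calc ∫ d, f (a • x + b • y) d ∂P ≤ ∫ d, (a * f x d + b * f y d) ∂P :=
        integral_mono_ae (hint _ (hs hx hy ha hb hab)) (hx'.add hy') <|
          hf.mono fun d hd => hd.2 hx hy ha hb hab
    _ = a • ∫ d, f x d ∂P + b • ∫ d, f y d ∂P := by
        rw [integral_add hx' hy', integral_const_mul, integral_const_mul, smul_eq_mul, smul_eq_mul]

theorem ConvexOn.iInf_snd {E F : Type*} [AddCommGroup E] [Module ℝ E] [AddCommGroup F] [Module ℝ F]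
    {G : E × F → ℝ} (hG : ConvexOn ℝ univ G) (hbdd : ∀ x, BddBelow (range fun y => G (x, y))) :
    ConvexOn ℝ univ fun x => ⨅ y, G (x, y) := by
  refine ⟨convex_univ, fun x _ x' _ a b ha hb hab => ?_⟩
  rw [smul_eq_mul, smul_eq_mul, Real.mul_iInf_of_nonneg ha, Real.mul_iInf_of_nonneg hb]
  refine le_ciInf_add_ciInf fun y y' => ?_
  calc ⨅ z, G (a • x + b • x', z) ≤ G (a • (x, y) + b • (x', y')) := by
        simpa only [Prod.smul_mk, Prod.mk_add_mk] using
          ciInf_le (hbdd (a • x + b • x')) (a • y + b • y')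
    _ ≤ a • G (x, y) + b • G (x', y') := hG.2 trivial trivial ha hb hab

section CVaR

variable {D : Type*} [MeasurableSpace D] {P : Measure D} {α : ℝ}

def cvarObjective (P : Measure D) (α : ℝ) (Z : D → ℝ) (t : ℝ) : ℝ :=
  t + α⁻¹ * ∫ d, max (Z d - t) 0 ∂P

def cvar (P : Measure D) (α : ℝ) (Z : D → ℝ) : ℝ :=
  ⨅ t, cvarObjective P α Z t

theorem integral_le_cvarObjective [IsProbabilityMeasure P] {Z : D → ℝ} (hZ : Integrable Z P)
    (hα : α ∈ Ioc 0 1) (t : ℝ) : ∫ d, Z d ∂P ≤ cvarObjective P α Z t := by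
  have hpos : Integrable (fun d => max (Z d - t) 0) P := (hZ.sub (integrable_const t)).pos_part
  have hmean : ∫ d, Z d ∂P - t ≤ ∫ d, max (Z d - t) 0 ∂P :=
    calc ∫ d, Z d ∂P - t = ∫ d, (Z d - t) ∂P := by
          rw [integral_sub hZ (integrable_const t), integral_const, probReal_univ, one_smul]
      _ ≤ ∫ d, max (Z d - t) 0 ∂P :=
          integral_mono (hZ.sub (integrable_const t)) hpos fun d => le_max_left _ _
  have hscale : ∫ d, max (Z d - t) 0 ∂P ≤ α⁻¹ * ∫ d, max (Z d - t) 0 ∂P :=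
    le_mul_of_one_le_left (integral_nonneg fun d => le_max_right _ _)
      (one_le_inv₀ hα.1 |>.mpr hα.2)
  rw [cvarObjective]
  linarith

theorem bddBelow_range_cvarObjective [IsProbabilityMeasure P] {Z : D → ℝ} (hZ : Integrable Z P)
    (hα : α ∈ Ioc 0 1) : BddBelow (range (cvarObjective P α Z)) :=
  ⟨_, forall_mem_range.2 (integral_le_cvarObjective hZ hα)⟩

theorem cvarObjective_sub_const (Z : D → ℝ) (k t : ℝ) :
    cvarObjective P α (fun d => Z d - k) t = cvarObjective P α Z (t + k) - k := by
  simp only [cvarObjective, sub_sub, add_comm k]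
  ring

theorem cvar_sub_const {Z : D → ℝ} (hZ : BddBelow (range (cvarObjective P α Z))) (k : ℝ) :
    cvar P α (fun d => Z d - k) = cvar P α Z - k := by
  simp only [cvar, cvarObjective_sub_const]
  exact ((Equiv.addRight k).iInf_comp (g := fun s => cvarObjective P α Z s - k)).trans
    ((OrderIso.subRight k).map_ciInf hZ).symm

theorem convexOn_cvarObjective {E : Type*} [AddCommGroup E] [Module ℝ E] [IsFiniteMeasure P]
    (hα : 0 ≤ α) {Z : E → D → ℝ} (hZ : ∀ᵐ d ∂P, ConvexOn ℝ univ fun x => Z x d)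
    (hint : ∀ x, Integrable (Z x) P) :
    ConvexOn ℝ univ fun p : E × ℝ => cvarObjective P α (Z p.1) p.2 := by
  have hexcess : ∀ᵐ d ∂P, ConvexOn ℝ univ fun p : E × ℝ => max (Z p.1 d - p.2) 0 :=
    hZ.mono fun d hd =>
      ((hd.comp_linearMap (LinearMap.fst ℝ E ℝ)).add
        ((LinearMap.snd ℝ E ℝ).concaveOn convex_univ).neg).sup (convexOn_const 0 convex_univ)
  exact ((LinearMap.snd ℝ E ℝ).convexOn convex_univ).add
    ((convexOn_integral convex_univ hexcess fun p _ =>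
      ((hint p.1).sub (integrable_const p.2)).pos_part).smul (inv_nonneg.2 hα))

theorem convexOn_cvar {E : Type*} [AddCommGroup E] [Module ℝ E] [IsProbabilityMeasure P]
    (hα : α ∈ Ioc 0 1) {Z : E → D → ℝ} (hZ : ∀ᵐ d ∂P, ConvexOn ℝ univ fun x => Z x d)
    (hint : ∀ x, Integrable (Z x) P) :
    ConvexOn ℝ univ fun x => cvar P α (Z x) :=
  (convexOn_cvarObjective hα.1.le hZ hint).iInf_snd fun x =>
    bddBelow_range_cvarObjective (hint x) hα

end CVaR

theorem cvar_of_strongly_convex_loss_strongly_convex_general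
    {m : ℕ} {D : Type*} [MeasurableSpace D]
    (P : Measure D) [IsProbabilityMeasure P]
    (ℓ : EuclideanSpace ℝ (Fin m) → D → ℝ)
    (hint : ∀ θ, Integrable (ℓ θ) P)
    (α : ℝ) (hα : α ∈ Set.Ioc (0 : ℝ) 1)
    (μ : ℝ)
    (hsc : ∀ᵐ d ∂P, ConvexOn ℝ Set.univ (fun θ => ℓ θ d - μ / 2 * ‖θ‖ ^ 2)) :
    (∀ θ, BddBelow (Set.range fun t : ℝ => t + α⁻¹ * ∫ d, max (ℓ θ d - t) 0 ∂P)) ∧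
    ConvexOn ℝ Set.univ
      (fun θ => (⨅ t : ℝ, (t + α⁻¹ * ∫ d, max (ℓ θ d - t) 0 ∂P)) - μ / 2 * ‖θ‖ ^ 2) := by
  have hbdd θ := bddBelow_range_cvarObjective (hint θ) hα
  refine ⟨hbdd, ?_⟩
  have hshifted := convexOn_cvar hα hsc fun θ => (hint θ).sub (integrable_const (μ / 2 * ‖θ‖ ^ 2))
  simp only [cvar_sub_const (hbdd _)] at hshifted
  exact hshifted

/-- If the loss `θ ↦ ℓ θ d` is `μ`-strongly convex for `P`-a.e. example `d`
(`μ > 0`, i.e. `ℓ(·,d) - (μ/2)‖·‖²` is convex) and `ℓ θ` is `P`-integrable for every `θ`,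
then `θ ↦ CV@R^α(ℓ(θ,·)) = inf_t { t + (1/α)·E_P[(ℓ(θ,d) - t)₊] }` is real-valued (the
infimum is over a set bounded below) and `μ`-strongly convex on `ℝ^m`, for `α ∈ (0,1]`. -/
theorem cvar_of_strongly_convex_loss_strongly_convex
    {m : ℕ} {D : Type*} [MeasurableSpace D]
    (P : Measure D) [IsProbabilityMeasure P]
    (ℓ : EuclideanSpace ℝ (Fin m) → D → ℝ)
    (hmeas : ∀ θ, Measurable (ℓ θ))
    (hint : ∀ θ, Integrable (ℓ θ) P)
    (α : ℝ) (hα : α ∈ Set.Ioc (0 : ℝ) 1)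
    (μ : ℝ) (hμ : 0 < μ)
    (hsc : ∀ᵐ d ∂P, ConvexOn ℝ Set.univ (fun θ => ℓ θ d - μ / 2 * ‖θ‖ ^ 2)) :
    (∀ θ, BddBelow (Set.range fun t : ℝ => t + α⁻¹ * ∫ d, max (ℓ θ d - t) 0 ∂P)) ∧
    ConvexOn ℝ Set.univ
      (fun θ => (⨅ t : ℝ, (t + α⁻¹ * ∫ d, max (ℓ θ d - t) 0 ∂P)) - μ / 2 * ‖θ‖ ^ 2) :=
  cvar_of_strongly_convex_loss_strongly_convex_general P ℓ hint α hα μ hsc
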